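/- arXiv:2503.00810 — 2 statements merged into one kernel-verified Lean document; each statement's English description precedes it below -/
import Mathlib

section
/- Consider a sequence of K trajectories of length H over a finite state-action space S × A. Let N^{K+1}(s,a) be the total visit count of (s,a) over all K trajectories, and suppose each term 1/n_h^k(s_h^k, a_h^k) is summed only when the running within-count n_h^k(s_h^k,a_h^k) ≥ 2 and the pair count condition N^k(s,a) ≥ (1/2)n_h^k(s,a) holds (i.e., for h < η^k). Then for any increasing positive sequence {γ_k}: Σ_{k=1}^K Σ_{h=1}^{η^k−1} γ_k / N^k(s_h^k, a_h^k) ≤ 2γ_K · |S||A| · log(1 + KH/(|S||A|)). -/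
open Finset

variable {S A : Type*} [DecidableEq S] [DecidableEq A]

/-- `visitN H st ac k x y` is the number of times the state-action pair `(x,y)`
is visited during the first `k-1` episodes (each of length `H`). -/
def visitN (H : ℕ) (st : ℕ → ℕ → S) (ac : ℕ → ℕ → A) (k : ℕ) (x : S) (y : A) : ℕ :=
  ((Finset.Icc 1 (k - 1) ×ˢ Finset.Icc 1 H).filter
    (fun p => st p.1 p.2 = x ∧ ac p.1 p.2 = y)).card

/-- `visitn H st ac k h x y` counts visits of `(x,y)` up to (and including)
step `h` of episode `k`. -/
def visitn (H : ℕ) (st : ℕ → ℕ → S) (ac : ℕ → ℕ → A) (k h : ℕ) (x : S) (y : A) : ℕ :=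
  visitN H st ac k x y +
    ((Finset.Icc 1 h).filter (fun j => st k j = x ∧ ac k j = y)).card

/-- `eta H st ac k` is the first step `h ∈ [H]` of episode `k` at which
`n_h^k(s_h^k, a_h^k) > 2 N^k(s_h^k, a_h^k)`, and `H+1` if no such step exists. -/
def eta (H : ℕ) (st : ℕ → ℕ → S) (ac : ℕ → ℕ → A) (k : ℕ) : ℕ :=
  let T := (Finset.Icc 1 H).filter
    (fun h => 2 * visitN H st ac k (st k h) (ac k h) <
      visitn H st ac k h (st k h) (ac k h))
  if hT : T.Nonempty then T.min' hT else H + 1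

lemma harm_bound (M : ℕ) : ∑ j ∈ Finset.Icc 2 M, ((j:ℝ))⁻¹ ≤ Real.log (1 + M) := by
  rcases Nat.eq_zero_or_pos M with h | h
  · simp [h]
  · have h1 : (harmonic M : ℝ) = ∑ i ∈ Finset.Icc 1 M, ((i:ℝ))⁻¹ := by
      rw [harmonic_eq_sum_Icc]; push_cast; ring_nf
    have h2 : Finset.Icc 1 M = insert 1 (Finset.Icc 2 M) := by
      ext j; simp [Finset.mem_Icc, Finset.mem_insert]; omega
    have h3 : ∑ i ∈ Finset.Icc 1 M, ((i:ℝ))⁻¹ = 1 + ∑ j ∈ Finset.Icc 2 M, ((j:ℝ))⁻¹ := by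
      rw [h2, Finset.sum_insert (by simp)]; norm_num
    have h4 := harmonic_le_one_add_log M
    have h5 : Real.log M ≤ Real.log (1 + M) := by
      apply Real.log_le_log (by exact_mod_cast h)
      linarith
    have : (1:ℝ) + ∑ j ∈ Finset.Icc 2 M, ((j:ℝ))⁻¹ ≤ 1 + Real.log M := by
      rw [← h3, ← h1]; exact h4
    linarith

lemma visitN_mono (H : ℕ) (st : ℕ → ℕ → S) (ac : ℕ → ℕ → A) {k k' : ℕ} (hk : k ≤ k')
    (x : S) (y : A) : visitN H st ac k x y ≤ visitN H st ac k' x y := by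
  apply Finset.card_le_card
  apply Finset.filter_subset_filter
  apply Finset.product_subset_product_left
  exact Finset.Icc_subset_Icc_right (by omega)

lemma visitn_mono (H : ℕ) (st : ℕ → ℕ → S) (ac : ℕ → ℕ → A) {k h h' : ℕ} (hh : h ≤ h')
    (x : S) (y : A) : visitn H st ac k h x y ≤ visitn H st ac k h' x y := by
  apply Nat.add_le_add_left
  exact Finset.card_le_card (Finset.filter_subset_filter _ (Finset.Icc_subset_Icc_right hh))

lemma visitN_lt_visitn (H : ℕ) (st : ℕ → ℕ → S) (ac : ℕ → ℕ → A) {k h : ℕ} {x : S} {y : A}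
    (h1 : 1 ≤ h) (hx : st k h = x) (hy : ac k h = y) :
    visitN H st ac k x y < visitn H st ac k h x y := by
  have : 0 < ((Finset.Icc 1 h).filter (fun j => st k j = x ∧ ac k j = y)).card := by
    apply Finset.card_pos.mpr
    exact ⟨h, Finset.mem_filter.mpr ⟨Finset.mem_Icc.mpr ⟨h1, le_refl _⟩, hx, hy⟩⟩
  unfold visitn; omega

lemma visitn_lt_visitn (H : ℕ) (st : ℕ → ℕ → S) (ac : ℕ → ℕ → A) {k h h' : ℕ} {x : S} {y : A}
    (hh : h < h') (hx : st k h' = x) (hy : ac k h' = y) :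
    visitn H st ac k h x y < visitn H st ac k h' x y := by
  apply Nat.add_lt_add_left
  apply Finset.card_lt_card
  rw [Finset.ssubset_iff_of_subset
    (Finset.filter_subset_filter _ (Finset.Icc_subset_Icc_right hh.le))]
  exact ⟨h', Finset.mem_filter.mpr ⟨Finset.mem_Icc.mpr ⟨by omega, le_refl _⟩, hx, hy⟩,
    fun hc => by simp [Finset.mem_Icc] at hc; omega⟩

lemma visitn_le_visitN_succ (H : ℕ) (st : ℕ → ℕ → S) (ac : ℕ → ℕ → A) {k h : ℕ}
    (hk : 1 ≤ k) (hh : h ≤ H) (x : S) (y : A) :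
    visitn H st ac k h x y ≤ visitN H st ac (k + 1) x y := by
  classical
  set P : ℕ × ℕ → Prop := fun p => st p.1 p.2 = x ∧ ac p.1 p.2 = y with hP
  set A1 := (Finset.Icc 1 (k-1) ×ˢ Finset.Icc 1 H).filter P with hA1
  set A2 := (((Finset.Icc 1 h).filter (fun j => st k j = x ∧ ac k j = y)).image
      (fun j => (k, j))) with hA2
  have hinj : Function.Injective (fun j => ((k, j) : ℕ × ℕ)) := by
    intro a b hab; simpa using hab
  have hcard2 : A2.card = ((Finset.Icc 1 h).filter (fun j => st k j = x ∧ ac k j = y)).card :=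
    Finset.card_image_of_injective _ hinj
  have hdisj : Disjoint A1 A2 := by
    rw [Finset.disjoint_left]
    intro p hp1 hp2
    simp only [hA1, Finset.mem_filter, Finset.mem_product, Finset.mem_Icc] at hp1
    simp only [hA2, Finset.mem_image] at hp2
    obtain ⟨j, _, hj⟩ := hp2
    have : p.1 = k := by rw [← hj]
    omega
  have hsub : A1 ∪ A2 ⊆ (Finset.Icc 1 k ×ˢ Finset.Icc 1 H).filter P := by
    intro p hp
    rcases Finset.mem_union.mp hp with hp | hp
    · simp only [hA1, Finset.mem_filter, Finset.mem_product, Finset.mem_Icc] at hp ⊢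
      exact ⟨⟨⟨hp.1.1.1, by omega⟩, hp.1.2⟩, hp.2⟩
    · simp only [hA2, Finset.mem_image, Finset.mem_filter, Finset.mem_Icc] at hp
      obtain ⟨j, ⟨⟨hj1, hj2⟩, hst, hac⟩, hj⟩ := hp
      subst hj
      simp only [Finset.mem_filter, Finset.mem_product, Finset.mem_Icc]
      exact ⟨⟨⟨hk, le_refl _⟩, hj1, by omega⟩, hst, hac⟩
  calc visitn H st ac k h x y = A1.card + A2.card := by rw [hcard2]; rfl
    _ = (A1 ∪ A2).card := (Finset.card_union_of_disjoint hdisj).symm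
    _ ≤ ((Finset.Icc 1 k ×ˢ Finset.Icc 1 H).filter P).card := Finset.card_le_card hsub
    _ = visitN H st ac (k+1) x y := by simp [visitN]; rfl

lemma lt_eta_facts (H : ℕ) (st : ℕ → ℕ → S) (ac : ℕ → ℕ → A) (k h : ℕ)
    (h1 : 1 ≤ h) (h2 : h ≤ eta H st ac k - 1) :
    h ≤ H ∧ visitn H st ac k h (st k h) (ac k h) ≤ 2 * visitN H st ac k (st k h) (ac k h) := by
  set T := (Finset.Icc 1 H).filter
    (fun h => 2 * visitN H st ac k (st k h) (ac k h) <
      visitn H st ac k h (st k h) (ac k h)) with hT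
  have heta : eta H st ac k = if hne : T.Nonempty then T.min' hne else H + 1 := rfl
  by_cases hne : T.Nonempty
  · have hmin : T.min' hne ∈ T := T.min'_mem hne
    have hminH : T.min' hne ≤ H := (Finset.mem_Icc.mp (Finset.mem_filter.mp hmin).1).2
    have hetaeq : eta H st ac k = T.min' hne := by rw [heta, dif_pos hne]
    have hhH : h ≤ H := by omega
    refine ⟨hhH, ?_⟩
    by_contra hc
    have hmem : h ∈ T := Finset.mem_filter.mpr ⟨Finset.mem_Icc.mpr ⟨h1, hhH⟩, by omega⟩
    have := T.min'_le h hmem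
    omega
  · have hetaeq : eta H st ac k = H + 1 := by rw [heta, dif_neg hne]
    have hhH : h ≤ H := by omega
    refine ⟨hhH, ?_⟩
    by_contra hc
    exact hne ⟨h, Finset.mem_filter.mpr ⟨Finset.mem_Icc.mpr ⟨h1, hhH⟩, by omega⟩⟩

lemma visitn_injective (H : ℕ) (st : ℕ → ℕ → S) (ac : ℕ → ℕ → A) {k h k' h' : ℕ} {x : S} {y : A}
    (hk : 1 ≤ k) (hh1 : 1 ≤ h) (hhH : h ≤ H) (hx : st k h = x) (hy : ac k h = y)
    (hk' : 1 ≤ k') (hh1' : 1 ≤ h') (hhH' : h' ≤ H) (hx' : st k' h' = x) (hy' : ac k' h' = y)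
    (heq : visitn H st ac k h x y = visitn H st ac k' h' x y) : k = k' ∧ h = h' := by
  have key : ∀ a b c d : ℕ, 1 ≤ a → c ≤ H → a < b → 1 ≤ d → st b d = x → ac b d = y →
      visitn H st ac a c x y < visitn H st ac b d x y := by
    intro a b c d ha hc hab hd hbx hby
    calc visitn H st ac a c x y ≤ visitN H st ac (a+1) x y :=
          visitn_le_visitN_succ _ _ _ ha hc _ _
      _ ≤ visitN H st ac b x y := visitN_mono _ _ _ (by omega) _ _
      _ < visitn H st ac b d x y := visitN_lt_visitn _ _ _ hd hbx hby
  rcases lt_trichotomy k k' with hlt | heqk | hgt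
  · exact absurd heq (Nat.ne_of_lt (key k k' h h' hk hhH hlt hh1' hx' hy'))
  · subst heqk
    rcases lt_trichotomy h h' with hlt | heqh | hgt
    · exact absurd heq (Nat.ne_of_lt (visitn_lt_visitn _ _ _ hlt hx' hy'))
    · exact ⟨rfl, heqh⟩
    · exact absurd heq.symm (Nat.ne_of_lt (visitn_lt_visitn _ _ _ hgt hx hy))
  · exact absurd heq.symm (Nat.ne_of_lt (key k' k h' h hk' hhH' hgt hh1 hx hy))

/-- Potential lemma: for any sequence of `K` trajectories and any increasing
positive sequence `γ`,
`Σ_{k=1}^K Σ_{h=1}^{η^k-1} γ_k / N^k(s_h^k, a_h^k)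
  ≤ 2 γ_K |S||A| log(1 + KH/(|S||A|))`. -/
theorem potential_lemma [Fintype S] [Fintype A]
    (H K : ℕ) (hH : 1 ≤ H) (st : ℕ → ℕ → S) (ac : ℕ → ℕ → A)
    (γ : ℕ → ℝ) (hpos : ∀ k, 0 < γ k) (hmono : Monotone γ) :
    ∑ k ∈ Finset.Icc 1 K, ∑ h ∈ Finset.Icc 1 (eta H st ac k - 1),
        γ k / (visitN H st ac k (st k h) (ac k h) : ℝ) ≤
      2 * γ K * (Fintype.card S * Fintype.card A : ℝ) *
        Real.log (1 + (K * H : ℝ) / (Fintype.card S * Fintype.card A : ℝ)) := by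
  classical
  set n : ℕ := Fintype.card S * Fintype.card A with hn
  have hS : 0 < Fintype.card S := Fintype.card_pos_iff.mpr ⟨st 0 0⟩
  have hA : 0 < Fintype.card A := Fintype.card_pos_iff.mpr ⟨ac 0 0⟩
  have hn0 : 0 < n := Nat.mul_pos hS hA
  have hnR : (0:ℝ) < n := by exact_mod_cast hn0
  set M : S × A → ℕ := fun c => visitN H st ac (K+1) c.1 c.2 with hM
  set D : Finset ((_ : ℕ) × ℕ) :=
    (Finset.Icc 1 K).sigma (fun k => Finset.Icc 1 (eta H st ac k - 1)) with hD
  set key : (_ : ℕ) × ℕ → S × A := fun p => (st p.1 p.2, ac p.1 p.2) with hkey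
  -- Step 1: pointwise bound
  have step1 : ∑ k ∈ Finset.Icc 1 K, ∑ h ∈ Finset.Icc 1 (eta H st ac k - 1),
        γ k / (visitN H st ac k (st k h) (ac k h) : ℝ) ≤
      ∑ p ∈ D, 2 * γ K * ((visitn H st ac p.1 p.2 (st p.1 p.2) (ac p.1 p.2) : ℝ))⁻¹ := by
    rw [hD, Finset.sum_sigma]
    apply Finset.sum_le_sum
    intro k hk
    apply Finset.sum_le_sum
    intro h hh
    have hk1 := Finset.mem_Icc.mp hk
    have hh1 := Finset.mem_Icc.mp hh
    obtain ⟨hhH, hle⟩ := lt_eta_facts H st ac k h hh1.1 hh1.2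
    have hNlt : visitN H st ac k (st k h) (ac k h) < visitn H st ac k h (st k h) (ac k h) :=
      visitN_lt_visitn _ _ _ hh1.1 rfl rfl
    have hN1 : 1 ≤ visitN H st ac k (st k h) (ac k h) := by omega
    have hNpos : (0:ℝ) < (visitN H st ac k (st k h) (ac k h) : ℝ) := by exact_mod_cast hN1
    have hnhpos : (0:ℝ) < (visitn H st ac k h (st k h) (ac k h) : ℝ) := by
      have : 0 < visitn H st ac k h (st k h) (ac k h) := by omega
      exact_mod_cast this
    rw [← div_eq_mul_inv, div_le_div_iff₀ hNpos hnhpos]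
    have hγ : γ k ≤ γ K := hmono hk1.2
    have hcast : (visitn H st ac k h (st k h) (ac k h) : ℝ) ≤
        2 * (visitN H st ac k (st k h) (ac k h) : ℝ) := by exact_mod_cast hle
    nlinarith [hpos k, hpos K]
  -- Step 2: group by state-action pair
  have step2 : ∑ p ∈ D, 2 * γ K * ((visitn H st ac p.1 p.2 (st p.1 p.2) (ac p.1 p.2) : ℝ))⁻¹ =
      ∑ c ∈ Finset.univ (α := S × A), ∑ p ∈ D.filter (fun p => key p = c),
        2 * γ K * ((visitn H st ac p.1 p.2 (st p.1 p.2) (ac p.1 p.2) : ℝ))⁻¹ :=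
    (Finset.sum_fiberwise_of_maps_to (fun p _ => Finset.mem_univ (key p)) _).symm
  -- Step 3: per-fiber bound
  have step3 : ∀ c : S × A, ∑ p ∈ D.filter (fun p => key p = c),
        2 * γ K * ((visitn H st ac p.1 p.2 (st p.1 p.2) (ac p.1 p.2) : ℝ))⁻¹ ≤
      2 * γ K * Real.log (1 + M c) := by
    intro c
    have hfacts : ∀ p ∈ D.filter (fun p => key p = c),
        1 ≤ p.1 ∧ p.1 ≤ K ∧ 1 ≤ p.2 ∧ p.2 ≤ H ∧ st p.1 p.2 = c.1 ∧ ac p.1 p.2 = c.2 ∧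
        2 ≤ visitn H st ac p.1 p.2 c.1 c.2 ∧ visitn H st ac p.1 p.2 c.1 c.2 ≤ M c := by
      intro p hp
      obtain ⟨hpD, hpc⟩ := Finset.mem_filter.mp hp
      obtain ⟨hk, hh⟩ := Finset.mem_sigma.mp hpD
      have hk1 := Finset.mem_Icc.mp hk
      have hh1 := Finset.mem_Icc.mp hh
      have hx : st p.1 p.2 = c.1 := congrArg Prod.fst hpc
      have hy : ac p.1 p.2 = c.2 := congrArg Prod.snd hpc
      obtain ⟨hhH, hle⟩ := lt_eta_facts H st ac p.1 p.2 hh1.1 hh1.2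
      rw [hx, hy] at hle
      have hNlt : visitN H st ac p.1 c.1 c.2 < visitn H st ac p.1 p.2 c.1 c.2 :=
        visitN_lt_visitn _ _ _ hh1.1 hx hy
      have hub : visitn H st ac p.1 p.2 c.1 c.2 ≤ M c := by
        calc visitn H st ac p.1 p.2 c.1 c.2 ≤ visitN H st ac (p.1+1) c.1 c.2 :=
              visitn_le_visitN_succ _ _ _ hk1.1 hhH _ _
          _ ≤ visitN H st ac (K+1) c.1 c.2 := visitN_mono _ _ _ (by omega) _ _
      exact ⟨hk1.1, hk1.2, hh1.1, hhH, hx, hy, by omega, hub⟩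
    have heq1 : ∑ p ∈ D.filter (fun p => key p = c),
        2 * γ K * ((visitn H st ac p.1 p.2 (st p.1 p.2) (ac p.1 p.2) : ℝ))⁻¹ =
        2 * γ K * ∑ p ∈ D.filter (fun p => key p = c),
          ((visitn H st ac p.1 p.2 c.1 c.2 : ℝ))⁻¹ := by
      rw [Finset.mul_sum]
      apply Finset.sum_congr rfl
      intro p hp
      obtain ⟨_, _, _, _, hx, hy, _, _⟩ := hfacts p hp
      rw [hx, hy]
    rw [heq1]
    have hIm : ∑ p ∈ D.filter (fun p => key p = c),
        ((visitn H st ac p.1 p.2 c.1 c.2 : ℝ))⁻¹ =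
        ∑ j ∈ (D.filter (fun p => key p = c)).image
          (fun p => visitn H st ac p.1 p.2 c.1 c.2), ((j:ℝ))⁻¹ := by
      rw [Finset.sum_image]
      intro p hp q hq hpq
      obtain ⟨hk, _, hh, hH', hx, hy, _, _⟩ := hfacts p hp
      obtain ⟨hk', _, hh', hH'', hx', hy', _, _⟩ := hfacts q hq
      obtain ⟨h1, h2⟩ := visitn_injective H st ac hk hh hH' hx hy hk' hh' hH'' hx' hy' hpq
      exact Sigma.ext h1 (heq_of_eq h2)
    rw [hIm]
    have hsub : (D.filter (fun p => key p = c)).image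
        (fun p => visitn H st ac p.1 p.2 c.1 c.2) ⊆ Finset.Icc 2 (M c) := by
      intro j hj
      obtain ⟨p, hp, hpj⟩ := Finset.mem_image.mp hj
      obtain ⟨_, _, _, _, _, _, h2, hub⟩ := hfacts p hp
      rw [← hpj]
      exact Finset.mem_Icc.mpr ⟨h2, hub⟩
    have hle2 : ∑ j ∈ (D.filter (fun p => key p = c)).image
        (fun p => visitn H st ac p.1 p.2 c.1 c.2), ((j:ℝ))⁻¹ ≤
        ∑ j ∈ Finset.Icc 2 (M c), ((j:ℝ))⁻¹ := by
      apply Finset.sum_le_sum_of_subset_of_nonneg hsub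
      intro j _ _
      positivity
    have h2γ : (0:ℝ) ≤ 2 * γ K := by linarith [hpos K]
    calc 2 * γ K * ∑ j ∈ (D.filter (fun p => key p = c)).image
          (fun p => visitn H st ac p.1 p.2 c.1 c.2), ((j:ℝ))⁻¹
        ≤ 2 * γ K * ∑ j ∈ Finset.Icc 2 (M c), ((j:ℝ))⁻¹ :=
          mul_le_mul_of_nonneg_left hle2 h2γ
      _ ≤ 2 * γ K * Real.log (1 + M c) :=
          mul_le_mul_of_nonneg_left (harm_bound (M c)) h2γ
  -- Step 4: total visit count
  have hsumM : ∑ c ∈ Finset.univ (α := S × A), (M c : ℝ) ≤ (K : ℝ) * H := by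
    have hfib : (Finset.Icc 1 K ×ˢ Finset.Icc 1 H).card =
        ∑ c ∈ Finset.univ (α := S × A),
          ((Finset.Icc 1 K ×ˢ Finset.Icc 1 H).filter
            (fun p => (st p.1 p.2, ac p.1 p.2) = c)).card :=
      Finset.card_eq_sum_card_fiberwise (fun p _ => Finset.mem_univ _)
    have hMc : ∀ c : S × A, M c = ((Finset.Icc 1 K ×ˢ Finset.Icc 1 H).filter
        (fun p => (st p.1 p.2, ac p.1 p.2) = c)).card := by
      intro c
      simp only [hM, visitN, Nat.add_sub_cancel]
      congr 1
      apply Finset.filter_congr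
      intro p _
      simp [Prod.ext_iff]
    have hcard : (Finset.Icc 1 K ×ˢ Finset.Icc 1 H).card = K * H := by
      rw [Finset.card_product]
      simp [Nat.card_Icc]
    have heqn : ∑ c ∈ Finset.univ (α := S × A), M c = K * H := by
      rw [Finset.sum_congr rfl (fun c _ => hMc c), ← hfib, hcard]
    rw [← Nat.cast_sum, heqn]
    push_cast
    exact le_refl _
  -- Step 5: Jensen
  have step5 : ∑ c ∈ Finset.univ (α := S × A), Real.log (1 + M c) ≤
      (n : ℝ) * Real.log (1 + (K * H : ℝ) / (n : ℝ)) := by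
    have hcardSA : (Finset.univ (α := S × A)).card = n := by
      simp [hn, Fintype.card_prod]
    have hconc : ConcaveOn ℝ (Set.Ioi 0) Real.log := strictConcaveOn_log_Ioi.concaveOn
    have hjensen := hconc.le_map_sum (t := Finset.univ (α := S × A))
      (w := fun _ => (n:ℝ)⁻¹) (p := fun c => 1 + (M c : ℝ))
      (fun _ _ => by positivity)
      (by rw [Finset.sum_const, hcardSA, nsmul_eq_mul, mul_inv_cancel₀ (ne_of_gt hnR)])
      (fun c _ => by simp only [Set.mem_Ioi]; positivity)
    have hsumeq : ∑ c ∈ Finset.univ (α := S × A), (n:ℝ)⁻¹ • (1 + (M c : ℝ)) =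
        1 + (∑ c ∈ Finset.univ (α := S × A), (M c : ℝ)) / n := by
      have e1 : ∑ c ∈ Finset.univ (α := S × A), (1 + (M c : ℝ)) =
          (n:ℝ) + ∑ c ∈ Finset.univ (α := S × A), (M c : ℝ) := by
        rw [Finset.sum_add_distrib, Finset.sum_const, hcardSA, nsmul_eq_mul, mul_one]
      simp only [smul_eq_mul]
      rw [← Finset.mul_sum, e1, mul_add, inv_mul_cancel₀ (ne_of_gt hnR), div_eq_inv_mul]
    have hlogmono : Real.log (1 + (∑ c ∈ Finset.univ (α := S × A), (M c : ℝ)) / n) ≤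
        Real.log (1 + (K * H : ℝ) / n) := by
      apply Real.log_le_log (by positivity)
      have hMnn : (0:ℝ) ≤ ∑ c ∈ Finset.univ (α := S × A), (M c : ℝ) := by positivity
      have : (∑ c ∈ Finset.univ (α := S × A), (M c : ℝ)) / n ≤ (K * H : ℝ) / n := by
        gcongr
      push_cast
      linarith [this]
    have hfinal : ∑ c ∈ Finset.univ (α := S × A), (n:ℝ)⁻¹ • Real.log (1 + (M c : ℝ)) ≤
        Real.log (1 + (K * H : ℝ) / n) := by
      calc ∑ c ∈ Finset.univ (α := S × A), (n:ℝ)⁻¹ • Real.log (1 + (M c : ℝ))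
          ≤ Real.log (∑ c ∈ Finset.univ (α := S × A), (n:ℝ)⁻¹ • (1 + (M c : ℝ))) := hjensen
        _ = Real.log (1 + (∑ c ∈ Finset.univ (α := S × A), (M c : ℝ)) / n) := by rw [hsumeq]
        _ ≤ Real.log (1 + (K * H : ℝ) / n) := hlogmono
    have : ∑ c ∈ Finset.univ (α := S × A), Real.log (1 + (M c : ℝ)) =
        (n:ℝ) * ∑ c ∈ Finset.univ (α := S × A), (n:ℝ)⁻¹ • Real.log (1 + (M c : ℝ)) := by
      simp only [smul_eq_mul]
      rw [← Finset.mul_sum, ← mul_assoc, mul_inv_cancel₀ (ne_of_gt hnR), one_mul]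
    rw [this]
    exact mul_le_mul_of_nonneg_left hfinal (le_of_lt hnR)
  -- Assemble
  have h2γ : (0:ℝ) ≤ 2 * γ K := by linarith [hpos K]
  calc ∑ k ∈ Finset.Icc 1 K, ∑ h ∈ Finset.Icc 1 (eta H st ac k - 1),
        γ k / (visitN H st ac k (st k h) (ac k h) : ℝ)
      ≤ ∑ p ∈ D, 2 * γ K * ((visitn H st ac p.1 p.2 (st p.1 p.2) (ac p.1 p.2) : ℝ))⁻¹ := step1
    _ = ∑ c ∈ Finset.univ (α := S × A), ∑ p ∈ D.filter (fun p => key p = c),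
        2 * γ K * ((visitn H st ac p.1 p.2 (st p.1 p.2) (ac p.1 p.2) : ℝ))⁻¹ := step2
    _ ≤ ∑ c ∈ Finset.univ (α := S × A), 2 * γ K * Real.log (1 + M c) :=
        Finset.sum_le_sum (fun c _ => step3 c)
    _ = 2 * γ K * ∑ c ∈ Finset.univ (α := S × A), Real.log (1 + M c) := by
        rw [Finset.mul_sum]
    _ ≤ 2 * γ K * ((n : ℝ) * Real.log (1 + (K * H : ℝ) / (n : ℝ))) :=
        mul_le_mul_of_nonneg_left step5 h2γ
    _ = 2 * γ K * (Fintype.card S * Fintype.card A : ℝ) *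
        Real.log (1 + (K * H : ℝ) / (Fintype.card S * Fintype.card A : ℝ)) := by
        push_cast [hn]
        ring
end

section
/- For m ∈ ℕ ∪ {0}, constants C ≥ 3, S, A ∈ ℕ with SA ≥ 1, and H ≥ 1, define f(m) = min{1, 25·S·A·(C + 2·log(1+m))·log(1 + 2^m·H/(S·A)) / 2^m}. Then f is non-increasing in m. -/
/-- For `0 ≤ w ≤ 25`, `w/26 ≤ log(1+w)`. -/
lemma log_lower_aux (w : ℝ) (hw0 : 0 ≤ w) (hw : w ≤ 25) :
    w / 26 ≤ Real.log (1 + w) := by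
  have hpos : (0:ℝ) < 1 + w := by linarith
  have h := Real.log_le_sub_one_of_pos (show (0:ℝ) < 1/(1+w) by positivity)
  rw [Real.log_div one_ne_zero (ne_of_gt hpos), Real.log_one] at h
  have h1 : 1 - 1/(1+w) ≤ Real.log (1 + w) := by linarith
  have h2 : 1 - 1/(1+w) = w/(1+w) := by field_simp; ring
  have h3 : w/26 ≤ w/(1+w) :=
    div_le_div_of_nonneg_left hw0 hpos (by linarith)
  linarith

/-- The function
`f(m) = min{1, 25·S·A·(C + 2 log(1+m))·log(1 + 2^m H/(S·A))/2^m}`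
is non-increasing in `m`, for `C ≥ 3`, `S·A ≥ 1`, `H ≥ 1`. -/
theorem lambda_is_nonincreasing (C S A H : ℝ) (hC : 3 ≤ C) (hSA : 1 ≤ S * A)
    (hH : 1 ≤ H) :
    Antitone (fun m : ℕ =>
      min 1 (25 * S * A * (C + 2 * Real.log (1 + (m : ℝ))) *
        Real.log (1 + (2 : ℝ) ^ m * H / (S * A)) / (2 : ℝ) ^ m)) := by
  have hSA0 : (0:ℝ) < S * A := lt_of_lt_of_le one_pos hSA
  apply antitone_nat_of_succ_le
  intro m
  have h2m : (0:ℝ) < (2:ℝ)^m := by positivity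
  have hm0 : (0:ℝ) ≤ (m:ℝ) := Nat.cast_nonneg m
  set a : ℝ := C + 2 * Real.log (1 + (m : ℝ)) with ha_def
  set a' : ℝ := C + 2 * Real.log (1 + ((m+1 : ℕ) : ℝ)) with ha'_def
  set L : ℝ := Real.log (1 + (2:ℝ)^m * H / (S*A)) with hL_def
  set L' : ℝ := Real.log (1 + (2:ℝ)^(m+1) * H / (S*A)) with hL'_def
  have hlogm : 0 ≤ Real.log (1 + (m : ℝ)) := Real.log_nonneg (by linarith)
  have ha3 : 3 ≤ a := by simp only [ha_def]; linarith
  have hL0 : 0 ≤ L := Real.log_nonneg (le_add_of_nonneg_right (by positivity))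
  have hL'0 : 0 ≤ L' := Real.log_nonneg (le_add_of_nonneg_right (by positivity))
  by_cases hz : (2:ℝ)^m ≤ 25 * (S*A)
  · -- small case: g m ≥ 1, so min = 1
    have hw0 : (0:ℝ) ≤ (2:ℝ)^m / (S*A) := by positivity
    have hw25 : (2:ℝ)^m / (S*A) ≤ 25 := by
      rw [div_le_iff₀ hSA0]; linarith
    have hlow : (2:ℝ)^m / (S*A) / 26 ≤ Real.log (1 + (2:ℝ)^m / (S*A)) :=
      log_lower_aux _ hw0 hw25
    have hmono : Real.log (1 + (2:ℝ)^m / (S*A)) ≤ L := by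
      apply Real.log_le_log (by positivity)
      have : (2:ℝ)^m / (S*A) ≤ (2:ℝ)^m * H / (S*A) := by
        gcongr
        nlinarith
      linarith
    have hLlow : (2:ℝ)^m / (S*A) / 26 ≤ L := le_trans hlow hmono
    have hg1 : 1 ≤ 25 * S * A * a * L / (2:ℝ)^m := by
      have hnum : 3 * ((2:ℝ)^m / (S*A) / 26) ≤ a * L :=
        mul_le_mul ha3 hLlow (by positivity) (by linarith)
      have hstep : 25 * (S*A) * (3 * ((2:ℝ)^m / (S*A) / 26))
          ≤ 25 * (S*A) * (a * L) :=
        mul_le_mul_of_nonneg_left hnum (by linarith)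
      have key : 25 * (S*A) * (3 * ((2:ℝ)^m / (S*A) / 26)) = 75/26 * (2:ℝ)^m := by
        linear_combination (75/26 * (2:ℝ)^m) * mul_inv_cancel₀ hSA0.ne'
      rw [le_div_iff₀ h2m]
      nlinarith
    calc min 1 (25 * S * A * a' * L' / (2:ℝ)^(m+1)) ≤ 1 := min_le_left _ _
      _ ≤ min 1 (25 * S * A * a * L / (2:ℝ)^m) := le_min le_rfl hg1
  · -- large case: g(m+1) ≤ g(m)
    push_neg at hz
    apply min_le_min le_rfl
    have ha' : a' ≤ 3/2 * a := by
      have hlog2 : Real.log 2 < 0.6931471808 := Real.log_two_lt_d9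
      have hle : Real.log (1 + ((m+1 : ℕ) : ℝ))
          ≤ Real.log 2 + Real.log (1 + (m:ℝ)) := by
        rw [← Real.log_mul two_ne_zero (by linarith)]
        apply Real.log_le_log (by push_cast; linarith)
        push_cast; linarith
      simp only [ha'_def, ha_def]
      linarith
    have ha'0 : 0 ≤ a' := by
      have h1 : 0 ≤ Real.log (1 + ((m+1 : ℕ) : ℝ)) :=
        Real.log_nonneg (le_add_of_nonneg_right (by positivity))
      simp only [ha'_def]; linarith
    have hy25 : 25 ≤ (2:ℝ)^m * H / (S*A) := by
      rw [le_div_iff₀ hSA0]; nlinarith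
    have hL' : L' ≤ 4/3 * L := by
      set y : ℝ := (2:ℝ)^m * H / (S*A) with hy_def
      have hy0 : (0:ℝ) < y := by linarith
      have h2y : (2:ℝ)^(m+1) * H / (S*A) = 2 * y := by
        rw [hy_def, pow_succ]; ring
      have hstep : L' ≤ Real.log (2 * (1 + y)) := by
        rw [hL'_def, h2y]
        apply Real.log_le_log (by linarith) (by linarith)
      rw [Real.log_mul two_ne_zero (by linarith)] at hstep
      have h8 : Real.log 8 ≤ Real.log (1 + y) :=
        Real.log_le_log (by norm_num) (by linarith)
      have h8e : Real.log (8:ℝ) = 3 * Real.log 2 := by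
        rw [show (8:ℝ) = 2^3 by norm_num, Real.log_pow]; push_cast; ring
      rw [h8e] at h8
      have hLy : L = Real.log (1 + y) := rfl
      rw [hLy]
      linarith
    have hprod : a' * L' ≤ 2 * (a * L) := by
      have := mul_le_mul ha' hL' hL'0 (by linarith : (0:ℝ) ≤ 3/2 * a)
      nlinarith
    have h2m1 : (2:ℝ)^(m+1) = 2 * (2:ℝ)^m := by rw [pow_succ]; ring
    rw [h2m1, div_le_div_iff₀ (by positivity) h2m]
    nlinarith [mul_le_mul_of_nonneg_left hprod
      (by nlinarith : (0:ℝ) ≤ 25 * (S * A) * (2:ℝ)^m)]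
end
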